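/- arXiv:2107.11058 — 2 statements merged into one kernel-verified Lean document; each statement's English description precedes it below -/
import Mathlib

section
/- Let r be a natural number and m = 2^r. There is a probability measure μ on ℝ (namely the measure with mass 1/(r+2) at each of 1/2, 1/4, ..., 1/2^r and mass 2/(r+2) at 1/2^{r+1}) such that E_μ[g(kx)] = 1/(r+2) for all integers 1 ≤ k ≤ m. -/
/-! Since μ is a finite combination of point masses, the claim reduces to the identity
∑_{j=1}^r g(k/2^j) = 1 - k/2^r for 1 ≤ k ≤ 2^r, plus g(k/2^{r+1}) = k/2^{r+1}.
The identity follows by induction on r: for 2^r < k ≤ 2^{r+1}, replacing k by k - 2^r shifts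
each k/2^j with j ≤ r by an integer, which g does not see, while the new top term
k/2^{r+1} ∈ (1/2, 1] contributes k/2^{r+1} - 1. -/

open MeasureTheory

noncomputable def sawtooth (x : ℝ) : ℝ := x + ⌊(1:ℝ)/2 - x⌋

open Finset
open scoped ENNReal

theorem sawtooth_add_intCast (x : ℝ) (n : ℤ) : sawtooth (x + n) = sawtooth x := by
  rw [sawtooth, sawtooth, sub_add_eq_sub_sub, Int.floor_sub_intCast]
  push_cast
  ring

theorem sawtooth_eq_self {x : ℝ} (h₁ : -(1 / 2) < x) (h₂ : x ≤ 1 / 2) : sawtooth x = x := by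
  rw [sawtooth, Int.floor_eq_zero_iff.mpr ⟨by linarith, by linarith⟩, Int.cast_zero, add_zero]

theorem sawtooth_eq_sub_one {x : ℝ} (h₁ : 1 / 2 < x) (h₂ : x ≤ 3 / 2) :
    sawtooth x = x - 1 := by
  rw [← sawtooth_eq_self (x := x - 1) (by linarith) (by linarith),
    ← sawtooth_add_intCast (x - 1) 1, Int.cast_one, sub_add_cancel]

theorem natCast_div_two_pow_succ_mem_Ioc {r k : ℕ} (hk₀ : 0 < k) (hk : k ≤ 2 ^ r) :
    (k : ℝ) / 2 ^ (r + 1) ∈ Set.Ioc 0 (1 / 2) := by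
  have hk' : (k : ℝ) ≤ 2 ^ r := by exact_mod_cast hk
  refine ⟨by positivity, ?_⟩
  rw [div_le_iff₀ (by positivity), pow_succ]
  linarith

theorem sawtooth_natCast_div_two_pow_succ {r k : ℕ} (hk₀ : 0 < k) (hk : k ≤ 2 ^ r) :
    sawtooth (k / 2 ^ (r + 1)) = k / 2 ^ (r + 1) :=
  have h := natCast_div_two_pow_succ_mem_Ioc hk₀ hk
  sawtooth_eq_self (by linarith [h.1]) h.2

theorem sawtooth_natCast_add_two_pow_div (k : ℕ) {r j : ℕ} (hj : j ≤ r) :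
    sawtooth (((k + 2 ^ r : ℕ) : ℝ) / 2 ^ j) = sawtooth (k / 2 ^ j) := by
  have hjr : 2 ^ r = 2 ^ j * 2 ^ (r - j) := by rw [← pow_add, Nat.add_sub_cancel' hj]
  have : ((k + 2 ^ r : ℕ) : ℝ) / 2 ^ j = k / 2 ^ j + ((2 ^ (r - j) : ℤ) : ℝ) := by
    rw [hjr]
    push_cast
    field_simp
  rw [this, sawtooth_add_intCast]

theorem sum_sawtooth_div_two_pow :
    ∀ {r k : ℕ}, 0 < k → k ≤ 2 ^ r → ∑ j ∈ Icc 1 r, sawtooth (k / 2 ^ j) = 1 - k / 2 ^ r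
  | 0, k, hk₀, hk => by
    obtain rfl : k = 1 := by omega
    simp
  | r + 1, k, hk₀, hk => by
    rw [sum_Icc_succ_top (by omega)]
    rcases le_or_gt k (2 ^ r) with hkr | hkr
    · rw [sum_sawtooth_div_two_pow hk₀ hkr, sawtooth_natCast_div_two_pow_succ hk₀ hkr]
      field_simp
      ring
    · obtain ⟨k, rfl⟩ : ∃ k', k = k' + 2 ^ r := ⟨k - 2 ^ r, by omega⟩
      have hk₀' : 0 < k := by omega
      have hk' : k ≤ 2 ^ r := by
        rw [pow_succ] at hk
        omega
      have htop : ((k + 2 ^ r : ℕ) : ℝ) / 2 ^ (r + 1) = k / 2 ^ (r + 1) + 1 / 2 := by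
        push_cast
        field_simp
        ring
      have h := natCast_div_two_pow_succ_mem_Ioc hk₀' hk'
      rw [sum_congr rfl fun j hj => sawtooth_natCast_add_two_pow_div k (mem_Icc.mp hj).2,
        sum_sawtooth_div_two_pow hk₀' hk', htop,
        sawtooth_eq_sub_one (by linarith [h.1]) (by linarith [h.2])]
      field_simp
      ring

section WeightedDirac

variable {α ι E : Type*} [MeasurableSpace α] [MeasurableSingletonClass α]
  [NormedAddCommGroup E]

theorem integrable_smul_dirac (f : α → E) {c : ℝ≥0∞} (hc : c ≠ ∞) (a : α) :
    Integrable f (c • Measure.dirac a) :=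
  (integrable_dirac enorm_lt_top).smul_measure hc

theorem integrable_sum_smul_dirac (f : α → E) (s : Finset ι) {c : ι → ℝ≥0∞}
    (hc : ∀ i ∈ s, c i ≠ ∞) (a : ι → α) :
    Integrable f (∑ i ∈ s, c i • Measure.dirac (a i)) :=
  integrable_finsetSum_measure.mpr fun i hi => integrable_smul_dirac f (hc i hi) (a i)

variable [NormedSpace ℝ E] [CompleteSpace E]

theorem integral_smul_dirac (f : α → E) (c : ℝ≥0∞) (a : α) :
    ∫ x, f x ∂(c • Measure.dirac a) = c.toReal • f a := by
  rw [integral_smul_measure, integral_dirac]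

theorem integral_sum_smul_dirac (f : α → E) (s : Finset ι) {c : ι → ℝ≥0∞}
    (hc : ∀ i ∈ s, c i ≠ ∞) (a : ι → α) :
    ∫ x, f x ∂(∑ i ∈ s, c i • Measure.dirac (a i)) = ∑ i ∈ s, (c i).toReal • f (a i) := by
  rw [integral_finsetSum_measure fun i hi => integrable_smul_dirac f (hc i hi) (a i)]
  simp only [integral_smul_dirac]

end WeightedDirac

theorem stmt_6 (r : ℕ) (m : ℕ) (hm : m = 2^r)
    (μ : Measure ℝ)
    (hμ : μ = (∑ j ∈ Finset.Icc 1 r,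
        (ENNReal.ofReal (1 / (r + 2))) • Measure.dirac ((1:ℝ) / 2^j))
      + (ENNReal.ofReal (2 / (r + 2))) • Measure.dirac ((1:ℝ) / 2^(r+1))) :
    IsProbabilityMeasure μ ∧
      ∀ k : ℕ, 1 ≤ k → k ≤ m → (∫ x, sawtooth (k * x) ∂μ) = 1 / (r + 2) := by
  have hr : (0 : ℝ) < r + 2 := by positivity
  subst hμ hm
  constructor
  · constructor
    simp only [Measure.add_apply, Measure.coe_finsetSum, Finset.sum_apply, Measure.smul_apply,
      measure_univ, smul_eq_mul, mul_one, sum_const, Nat.card_Icc, add_tsub_cancel_right,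
      nsmul_eq_mul]
    rw [← ENNReal.ofReal_natCast, ← ENNReal.ofReal_mul (by positivity),
      ← ENNReal.ofReal_add (by positivity) (by positivity)]
    field_simp
    simp
  · intro k hk₀ hk
    rw [integral_add_measure (integrable_sum_smul_dirac _ _ (fun _ _ => ENNReal.ofReal_ne_top) _)
      (integrable_smul_dirac _ ENNReal.ofReal_ne_top _),
      integral_sum_smul_dirac _ _ (fun _ _ => ENNReal.ofReal_ne_top), integral_smul_dirac,
      ENNReal.toReal_ofReal (by positivity), ENNReal.toReal_ofReal (by positivity)]
    simp only [smul_eq_mul, ← mul_sum, mul_one_div]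
    rw [sum_sawtooth_div_two_pow hk₀ hk, sawtooth_natCast_div_two_pow_succ hk₀ hk]
    field_simp
    ring
end

section
/- Let r, m be natural numbers with 2^r < m ≤ 2^{r+1}. For every integer k with 1 ≤ k ≤ m, ∑_{j=1}^{r+1} g(k/2^j) + (m/2^r) · g(k/(2m)) = 1. -/
theorem Int.floor_half_add_floor_add_one_half {K : Type*} [Field K] [LinearOrder K]
    [IsStrictOrderedRing K] [FloorRing K] (x : K) :
    ⌊x / 2⌋ + ⌊(x + 1) / 2⌋ = ⌊x⌋ := by
  set a := ⌊x / 2⌋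
  have hlo : (a : K) ≤ x / 2 := Int.floor_le _
  have hhi : x / 2 < a + 1 := Int.lt_floor_add_one _
  rcases lt_or_ge x (2 * a + 1) with hx | hx
  · rw [show ⌊(x + 1) / 2⌋ = a from Int.floor_eq_iff.2 ⟨by linarith, by linarith⟩,
      show ⌊x⌋ = 2 * a from
        Int.floor_eq_iff.2 ⟨by push_cast; linarith, by push_cast; linarith⟩]
    ring
  · rw [show ⌊(x + 1) / 2⌋ = a + 1 from
        Int.floor_eq_iff.2 ⟨by push_cast; linarith, by push_cast; linarith⟩,
      show ⌊x⌋ = 2 * a + 1 from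
        Int.floor_eq_iff.2 ⟨by push_cast; linarith, by push_cast; linarith⟩]
    ring

theorem sawtooth_eq_add_floor_sub_floor (x : ℝ) :
    sawtooth x = x + (⌊-(2 * x)⌋ - ⌊-x⌋) := by
  have h := Int.floor_half_add_floor_add_one_half (-(2 * x))
  rw [show -(2 * x) / 2 = -x by ring, show (-(2 * x) + 1) / 2 = 1 / 2 - x by ring] at h
  rw [sawtooth, ← h]
  push_cast
  ring

theorem sawtooth_eq_self_s9 {x : ℝ} (hx : x ∈ Set.Ioc (-(1 / 2)) (1 / 2)) : sawtooth x = x := by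
  rw [sawtooth, Int.floor_eq_zero_iff.2 ⟨by linarith [hx.2], by linarith [hx.1]⟩]
  simp

theorem sum_sawtooth_div_two_pow_s9 (x : ℝ) (n : ℕ) :
    ∑ j ∈ Finset.Icc 1 n, sawtooth (x / 2 ^ j)
      = x * (1 - 1 / 2 ^ n) + (⌊-x⌋ - ⌊-(x / 2 ^ n)⌋) := by
  induction n with
  | zero => simp
  | succ n ih =>
    rw [Finset.sum_Icc_succ_top (by omega), ih, sawtooth_eq_add_floor_sub_floor,
      show 2 * (x / 2 ^ (n + 1)) = x / 2 ^ n by rw [pow_succ]; field_simp]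
    rw [pow_succ]
    ring

theorem Int.floor_neg_eq_neg_one {K : Type*} [Field K] [LinearOrder K] [IsStrictOrderedRing K]
    [FloorRing K] {x : K} (hx : x ∈ Set.Ioc 0 1) : ⌊-x⌋ = -1 :=
  Int.floor_eq_iff.2 ⟨by push_cast; linarith [hx.2], by push_cast; linarith [hx.1]⟩

theorem stmt_9_general (r m : ℕ) (h2 : m ≤ 2^(r+1))
    (k : ℕ) (hk1 : 1 ≤ k) (hkm : k ≤ m) :
    ∑ j ∈ Finset.Icc 1 (r+1), sawtooth ((k : ℝ) / 2^j)
      + (m : ℝ) / 2^r * sawtooth ((k : ℝ) / (2 * m)) = 1 := by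
  have hk : (1 : ℝ) ≤ k := by exact_mod_cast hk1
  have hkm' : (k : ℝ) ≤ m := by exact_mod_cast hkm
  have hm : (0 : ℝ) < m := by linarith
  have hk2 : (k : ℝ) ≤ 2 ^ (r + 1) := by exact_mod_cast hkm.trans h2
  have hlast : ⌊-((k : ℝ) / 2 ^ (r + 1))⌋ = -1 :=
    Int.floor_neg_eq_neg_one ⟨by positivity, (div_le_one (by positivity)).2 hk2⟩
  have hsmall : sawtooth ((k : ℝ) / (2 * m)) = k / (2 * m) := by
    refine sawtooth_eq_self_s9 ⟨by linarith [show (0 : ℝ) ≤ k / (2 * m) by positivity], ?_⟩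
    rw [div_le_iff₀ (by positivity)]
    linarith
  rw [sum_sawtooth_div_two_pow_s9, hlast, hsmall, show ⌊-(k : ℝ)⌋ = -k by
    exact_mod_cast Int.floor_intCast (-(k : ℤ))]
  field_simp
  push_cast
  ring

theorem stmt_9 (r m : ℕ) (h1 : 2^r < m) (h2 : m ≤ 2^(r+1))
    (k : ℕ) (hk1 : 1 ≤ k) (hkm : k ≤ m) :
    ∑ j ∈ Finset.Icc 1 (r+1), sawtooth ((k : ℝ) / 2^j)
      + (m : ℝ) / 2^r * sawtooth ((k : ℝ) / (2 * m)) = 1 :=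
  stmt_9_general r m h2 k hk1 hkm
end
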